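/- arXiv:1412.6161 — 3 statements merged into one kernel-verified Lean document; each statement's English description precedes it below -/
import Mathlib

section
/- Let $A_1, \ldots, A_M$ be Schur stable (spectral radius $< 1$) diagonalizable real $N \times N$ matrices with eigendecompositions $A_i = V_i D_i V_i^{-1}$, and let $\mathcal{G}$ be a switching digraph with edge weights $\omega^+_{ij} = \ln\|V_j^{-1} V_i\|$ and $\omega^-_{ij} = -\ln \rho_i > 0$, where $\rho_i$ is the spectral radius of $A_i$. If the dwell time $\tau$ satisfies $\tau > \nu(\mathcal{G})$, the maximum cycle ratio of $\mathcal{G}$, then for every switching signal respecting $\mathcal{G}$ with all intervals $t_k - t_{k-1} \ge \tau$, the solution of $x(t+1) = A_{\sigma(t)} x(t)$ satisfies $x(t) \to 0$ as $t \to \infty$. -/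
open scoped Matrix.Norms.L2Operator

/-- A cycle, represented by the list of its distinct vertices; every consecutive pair,
including the wrap-around pair, is a directed edge. -/
def IsCycleList {V : Type*} (E : V → V → Prop) (c : List V) : Prop :=
  c ≠ [] ∧ c.Nodup ∧ ∀ p ∈ c.zip (c.rotate 1), E p.1 p.2

/-- The weight of a cycle: the sum of its edge weights, including the wrap-around edge. -/
def cycleWeight {V : Type*} (ω : V → V → ℝ) (c : List V) : ℝ :=
  ((c.zip (c.rotate 1)).map fun p => ω p.1 p.2).sum

/-!
In the modal coordinates `z k = V⁻¹ x (t k)` of the subsystem active on the `k`-th dwell interval,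
one interval multiplies `‖z‖` by at most `‖Vⱼ⁻¹ Vᵢ‖ ρᵢ ^ τ = ρᵢ ^ (τ - ν) * exp (ω⁺ᵢⱼ - ν ω⁻ᵢⱼ)`.
Because `ν` is the maximum cycle ratio, every cycle has nonpositive weight for `ω⁺ - ν ω⁻`, so after
cutting cycles out of the switching walk the accumulated exponent stays bounded, while
`ρᵢ ^ (τ - ν) ≤ q < 1`. Hence `z k → 0` geometrically, and inside an interval `‖x‖ ≤ ‖Vᵢ‖ ‖z k‖`.
-/

open Filter Topology Matrix

section Walks

variable {α : Type*}

def walkWeight (f : α → α → ℝ) (w : ℕ → α) (n : ℕ) : ℝ :=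
  ∑ j ∈ Finset.range n, f (w j) (w (j + 1))

lemma walkWeight_add (f : α → α → ℝ) (w : ℕ → α) (m n : ℕ) :
    walkWeight f w (m + n) = walkWeight f w m + walkWeight f (fun j => w (m + j)) n := by
  simp only [walkWeight, Finset.sum_range_add, add_assoc]

lemma zip_rotate_map_range' {w : ℕ → α} {a c : ℕ} (h : w (a + c) = w a) :
    ((List.range' a c).map w).zip (((List.range' a c).map w).rotate 1) =
      (List.range' a c).map fun j => (w j, w (j + 1)) := by
  refine List.ext_getElem (by simp) fun i hi _ => ?_
  have hic : i < c := by simpa using hi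
  simp only [List.getElem_zip, List.getElem_rotate, List.getElem_map, List.getElem_range',
    List.length_map, List.length_range', one_mul]
  rcases Nat.lt_or_ge (i + 1) c with hlt | hge
  · rw [Nat.mod_eq_of_lt hlt, add_assoc]
  · obtain rfl : c = i + 1 := by omega
    rw [Nat.mod_self, add_zero, ← h, add_assoc]

lemma cycleWeight_map_range' (f : α → α → ℝ) {w : ℕ → α} {a c : ℕ} (h : w (a + c) = w a) :
    cycleWeight f ((List.range' a c).map w) = walkWeight f (fun j => w (a + j)) c := by
  rw [cycleWeight, zip_rotate_map_range' h, List.map_map, List.range'_eq_map_range, List.map_map,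
    walkWeight, Finset.sum_eq_multiset_sum, Finset.range_val, Multiset.range, Multiset.map_coe,
    Multiset.sum_coe]
  rfl

variable {E : α → α → Prop}

def cutSegment (w : ℕ → α) (a c : ℕ) : ℕ → α := fun j => if j < a then w j else w (j + c)

lemma cutSegment_adj {w : ℕ → α} (hE : ∀ j, E (w j) (w (j + 1))) {a c : ℕ}
    (h : w (a + c) = w a) (j : ℕ) : E (cutSegment w a c j) (cutSegment w a c (j + 1)) := by
  unfold cutSegment
  rcases lt_trichotomy (j + 1) a with hlt | heq | hgt
  · rw [if_pos (by omega), if_pos hlt]; exact hE j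
  · subst heq
    rw [if_pos (by omega), if_neg (by omega), h]
    exact hE j
  · rw [if_neg (by omega), if_neg (by omega), add_right_comm]; exact hE (j + c)

lemma walkWeight_cutSegment (f : α → α → ℝ) {w : ℕ → α} {a c : ℕ} (h : w (a + c) = w a)
    (r : ℕ) : walkWeight f w (a + c + r) =
      walkWeight f (cutSegment w a c) (a + r) + walkWeight f (fun j => w (a + j)) c := by
  have hpre : walkWeight f (cutSegment w a c) a = walkWeight f w a := by
    refine Finset.sum_congr rfl fun j hj => ?_
    rw [Finset.mem_range] at hj
    have hsucc : cutSegment w a c (j + 1) = w (j + 1) := by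
      unfold cutSegment
      split_ifs with hlt
      · rfl
      · obtain rfl : a = j + 1 := by omega
        exact h
    rw [hsucc, cutSegment, if_pos hj]
  have hpost : (fun j => cutSegment w a c (a + j)) = fun j => w (a + c + j) := by
    funext j
    rw [cutSegment, if_neg (by omega), add_right_comm]
  rw [walkWeight_add, walkWeight_add, walkWeight_add _ (cutSegment w a c), hpre, hpost]
  ring

variable [Fintype α]

/-- By pigeonhole among the first `card α + 1` vertices, a walk revisits a vertex; the first
revisit closes a simple cycle. -/
lemma exists_isCycleList_map_range' {w : ℕ → α} (hE : ∀ j, E (w j) (w (j + 1))) :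
    ∃ a c, 0 < c ∧ a + c ≤ Fintype.card α ∧ w (a + c) = w a ∧
      IsCycleList E ((List.range' a c).map w) := by
  classical
  have hrep : ∃ b, b ≤ Fintype.card α ∧ ∃ a < b, w a = w b := by
    obtain ⟨i, j, hij, h⟩ := Fintype.exists_ne_map_eq_of_card_lt
      (fun i : Fin (Fintype.card α + 1) => w i) (by simp)
    rcases lt_or_gt_of_ne hij with hlt | hlt
    · exact ⟨j, by omega, i, hlt, h⟩
    · exact ⟨i, by omega, j, hlt, h.symm⟩
  obtain ⟨hb, a, hab, hw⟩ := Nat.find_spec hrep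
  have hmin : ∀ r < Nat.find hrep, ∀ p < r, w p ≠ w r := fun r hr p hp hpr =>
    Nat.find_min hrep hr ⟨by omega, p, hp, hpr⟩
  have hwac : w (a + (Nat.find hrep - a)) = w a := by rw [Nat.add_sub_cancel' hab.le, hw]
  refine ⟨a, Nat.find hrep - a, by omega, by omega, hwac, by simp; omega, ?_, ?_⟩
  · refine List.Nodup.map_on (fun p hp r hr hpr => ?_) List.nodup_range'
    rw [List.mem_range'_1] at hp hr
    by_contra hne
    rcases lt_or_gt_of_ne hne with hlt | hlt
    · exact hmin r (by omega) p hlt hpr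
    · exact hmin p (by omega) r hlt hpr.symm
  · intro p hp
    rw [zip_rotate_map_range' hwac] at hp
    obtain ⟨j, -, rfl⟩ := List.mem_map.mp hp
    exact hE j

/-- Cutting out simple cycles, which weigh at most `0`, shortens the walk below `card α` steps. -/
lemma walkWeight_le_card_mul {f : α → α → ℝ} {K : ℝ} (hK0 : 0 ≤ K) (hK : ∀ i j, f i j ≤ K)
    (hcyc : ∀ C, IsCycleList E C → cycleWeight f C ≤ 0) (n : ℕ) {w : ℕ → α}
    (hE : ∀ j, E (w j) (w (j + 1))) : walkWeight f w n ≤ Fintype.card α * K := by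
  induction n using Nat.strong_induction_on generalizing w with
  | _ n ih =>
  by_cases hn : n < Fintype.card α
  · calc walkWeight f w n ≤ ∑ _j ∈ Finset.range n, K := Finset.sum_le_sum fun j _ => hK _ _
      _ = n * K := by simp
      _ ≤ Fintype.card α * K := by gcongr
  · obtain ⟨a, c, hc, hac, hw, hC⟩ := exists_isCycleList_map_range' hE
    obtain ⟨r, rfl⟩ : ∃ r, n = a + c + r := ⟨n - (a + c), by omega⟩
    have hcut := ih (a + r) (by omega) (cutSegment_adj hE hw)
    have hcycle := hcyc _ hC
    rw [cycleWeight_map_range' f hw] at hcycle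
    rw [walkWeight_cutSegment f hw]
    linarith

lemma exists_walkWeight_le (f : α → α → ℝ) (hcyc : ∀ C, IsCycleList E C → cycleWeight f C ≤ 0) :
    ∃ B, ∀ w : ℕ → α, (∀ j, E (w j) (w (j + 1))) → ∀ n, walkWeight f w n ≤ B := by
  cases isEmpty_or_nonempty α
  · exact ⟨0, fun w _ _ => isEmptyElim (w 0)⟩
  obtain ⟨p, hp⟩ := Finite.exists_max fun p : α × α => f p.1 p.2
  exact ⟨Fintype.card α * max (f p.1 p.2) 0, fun w hE n =>
    walkWeight_le_card_mul (le_max_right _ _) (fun i j => (hp (i, j)).trans (le_max_left _ _))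
      hcyc n hE⟩

end Walks

section Ratio
variable {α : Type*}

lemma cycleWeight_sub_mul (p q : α → α → ℝ) (ν : ℝ) (c : List α) :
    cycleWeight (fun i j => p i j - ν * q i j) c = cycleWeight p c - ν * cycleWeight q c := by
  unfold cycleWeight
  induction c.zip (c.rotate 1) with
  | nil => simp
  | cons e l ih => simp only [List.map_cons, List.sum_cons, ih]; ring

lemma cycleWeight_pos {q : α → α → ℝ} (hq : ∀ i j, 0 < q i j) {c : List α} (hc : c ≠ []) :
    0 < cycleWeight q c := by
  refine List.sum_pos _ (fun r hr => ?_) (by simpa [List.zip_eq_nil_iff] using hc)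
  obtain ⟨e, -, rfl⟩ := List.mem_map.mp hr
  exact hq _ _

lemma cycleWeight_sub_mul_nonpos {p q : α → α → ℝ} (hq : ∀ i j, 0 < q i j) {c : List α}
    (hc : c ≠ []) {ν : ℝ} (hν : cycleWeight p c / cycleWeight q c ≤ ν) :
    cycleWeight (fun i j => p i j - ν * q i j) c ≤ 0 := by
  rw [cycleWeight_sub_mul, sub_nonpos, ← div_le_iff₀ (cycleWeight_pos hq hc)]
  exact hν
end Ratio

lemma mul_pow_le_rpow_sub_mul_exp {c ρ ν τ : ℝ} {L : ℕ} (hρ0 : 0 < ρ) (hρ1 : ρ ≤ 1)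
    (hL : τ ≤ L) : c * ρ ^ L ≤ ρ ^ (τ - ν) * Real.exp (Real.log c - ν * -Real.log ρ) := by
  calc c * ρ ^ L = c * ρ ^ (L : ℝ) := by rw [Real.rpow_natCast]
    _ ≤ Real.exp (Real.log c) * ρ ^ τ :=
      mul_le_mul (Real.le_exp_log c) (Real.rpow_le_rpow_of_exponent_ge hρ0 hρ1 hL) (by positivity)
        (Real.exp_nonneg _)
    _ = ρ ^ (τ - ν) * Real.exp (Real.log c - ν * -Real.log ρ) := by
      rw [Real.rpow_def_of_pos hρ0, Real.rpow_def_of_pos hρ0, ← Real.exp_add, ← Real.exp_add]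
      ring_nf

lemma tendsto_zero_of_le_mul_exp {a e : ℕ → ℝ} {q B : ℝ} (ha : ∀ k, 0 ≤ a k) (hq0 : 0 ≤ q)
    (hq1 : q < 1) (hstep : ∀ k, a (k + 1) ≤ q * Real.exp (e k) * a k)
    (hB : ∀ n, ∑ j ∈ Finset.range n, e j ≤ B) : Tendsto a atTop (𝓝 0) := by
  have ha0 := ha 0
  have hiter : ∀ k, a k ≤ q ^ k * Real.exp (∑ j ∈ Finset.range k, e j) * a 0 := by
    intro k
    induction k with
    | zero => simp
    | succ k ih =>
      calc a (k + 1) ≤ q * Real.exp (e k) * a k := hstep k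
        _ ≤ q * Real.exp (e k) * (q ^ k * Real.exp (∑ j ∈ Finset.range k, e j) * a 0) := by
          gcongr
        _ = q ^ (k + 1) * Real.exp (∑ j ∈ Finset.range (k + 1), e j) * a 0 := by
          rw [Finset.sum_range_succ, Real.exp_add, pow_succ]
          ring
  have hlim : Tendsto (fun k => q ^ k * Real.exp B * a 0) atTop (𝓝 0) := by
    simpa using
      ((tendsto_pow_atTop_nhds_zero_of_lt_one hq0 hq1).mul_const (Real.exp B)).mul_const (a 0)
  refine squeeze_zero ha (fun k => (hiter k).trans ?_) hlim
  gcongr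
  exact hB k

lemma exists_le_and_lt_of_strictMono {t : ℕ → ℕ} (ht0 : t 0 = 0) (ht : StrictMono t) (u : ℕ) :
    ∃ k, t k ≤ u ∧ u < t (k + 1) := by
  classical
  have hex : ∃ k, u < t (k + 1) := ⟨u, Nat.lt_of_lt_of_le (Nat.lt_succ_self u) (ht.id_le _)⟩
  refine ⟨Nat.find hex, ?_, Nat.find_spec hex⟩
  rcases h : Nat.find hex with _ | k
  · simp [ht0]
  · exact not_lt.mp (Nat.find_min hex (by omega : k < Nat.find hex))

lemma tendsto_zero_of_norm_le_on_blocks {X : Type*} [SeminormedAddCommGroup X] {t : ℕ → ℕ}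
    (ht0 : t 0 = 0) (ht : StrictMono t) {a : ℕ → ℝ} (ha : Tendsto a atTop (𝓝 0)) {c : ℝ}
    {y : ℕ → X} (hy : ∀ k u, t k ≤ u → u < t (k + 1) → ‖y u‖ ≤ c * a k) :
    Tendsto y atTop (𝓝 0) := by
  choose κ hκ using exists_le_and_lt_of_strictMono ht0 ht
  have hκ_top : Tendsto κ atTop atTop := tendsto_atTop_atTop.2 fun b =>
    ⟨t b, fun u hu => Nat.lt_succ_iff.1 (ht.lt_iff_lt.1 (hu.trans_lt (hκ u).2))⟩
  refine squeeze_zero_norm (fun u => hy _ u (hκ u).1 (hκ u).2) ?_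
  simpa using (ha.comp hκ_top).const_mul c

lemma toLp_ofReal_mulVec {n : Type*} [Fintype n] [DecidableEq n]
    (A : Matrix n n ℝ) (v : n → ℝ) :
    WithLp.toLp 2 (fun j => ((A *ᵥ v) j : ℂ)) =
      toEuclideanCLM (𝕜 := ℂ) (A.map Complex.ofReal) (WithLp.toLp 2 fun j => (v j : ℂ)) := by
  rw [toEuclideanCLM_toLp]
  congr 1
  funext j
  exact RingHom.map_mulVec Complex.ofRealHom A v j

lemma norm_le_norm_toLp_ofReal {n : Type*} [Fintype n] (v : n → ℝ) :
    ‖v‖ ≤ ‖WithLp.toLp 2 fun j => (v j : ℂ)‖ := by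
  refine (pi_norm_le_iff_of_nonneg (norm_nonneg _)).2 fun j => ?_
  rw [← Complex.norm_real]
  exact PiLp.norm_apply_le (WithLp.toLp 2 fun j => (v j : ℂ)) j

section Modal
variable {𝕜 n : Type*} [RCLike 𝕜] [Fintype n] [DecidableEq n]

lemma norm_pow_le_of_isDiag {D : Matrix n n 𝕜} (hD : D.IsDiag) {r : ℝ} (hr : 0 ≤ r)
    (h : ∀ j, ‖D j j‖ ≤ r) (k : ℕ) : ‖D ^ k‖ ≤ r ^ k := by
  rw [← hD.diagonal_diag, diagonal_pow, l2_opNorm_diagonal,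
    pi_norm_le_iff_of_nonneg (pow_nonneg hr k)]
  intro j
  rw [Pi.pow_apply, norm_pow]
  exact pow_le_pow_left₀ (norm_nonneg _) (h j) k

lemma norm_diag_le_spectralRadius {V D : Matrix n n 𝕜} (hV : IsUnit V) (hD : D.IsDiag) (j : n) :
    ‖D j j‖ ≤ (spectralRadius 𝕜 (V * D * V⁻¹)).toReal := by
  obtain ⟨u, rfl⟩ := hV
  have : Nonempty n := ⟨j⟩
  rw [← coe_units_inv, spectralRadius, spectrum.units_conjugate, ← spectralRadius]
  have hmem : D j j ∈ spectrum 𝕜 D := by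
    rw [← hD.diagonal_diag, spectrum_diagonal]
    exact ⟨j, by simp⟩
  have hfin : spectralRadius 𝕜 D ≠ ⊤ :=
    ne_top_of_le_ne_top ENNReal.coe_ne_top (spectrum.spectralRadius_le_nnnorm D)
  exact (ENNReal.toReal_le_toReal ENNReal.coe_ne_top hfin).mpr
    (le_iSup₂ (f := fun k (_ : k ∈ spectrum 𝕜 D) => (‖k‖₊ : ENNReal)) _ hmem)

lemma norm_mul_conj_pow_mul_le {V D : Matrix n n 𝕜} (hV : IsUnit V) (hD : D.IsDiag) {r : ℝ}
    (hr : 0 ≤ r) (h : ∀ j, ‖D j j‖ ≤ r) (W : Matrix n n 𝕜) (k : ℕ) :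
    ‖W * (V * D * V⁻¹) ^ k * V‖ ≤ ‖W * V‖ * r ^ k := by
  obtain ⟨u, rfl⟩ := hV
  rw [← coe_units_inv, Units.conj_pow, mul_assoc, mul_assoc, mul_assoc, Units.inv_mul, mul_one,
    ← mul_assoc]
  exact (l2_opNorm_mul _ _).trans (by gcongr; exact norm_pow_le_of_isDiag hD hr h k)

lemma norm_toEuclideanCLM_le_of_block {y : ℕ → EuclideanSpace 𝕜 n} {F : ℕ → Matrix n n 𝕜}
    (hy : ∀ u, y (u + 1) = toEuclideanCLM (𝕜 := 𝕜) (F u) (y u)) {V D : Matrix n n 𝕜}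
    (hV : IsUnit V) (hD : D.IsDiag) {r : ℝ} (hr : 0 ≤ r) (h : ∀ j, ‖D j j‖ ≤ r) {a b : ℕ}
    (hF : ∀ u, a ≤ u → u < b → F u = V * D * V⁻¹) (W : Matrix n n 𝕜) {m : ℕ} (hm : a + m ≤ b) :
    ‖toEuclideanCLM (𝕜 := 𝕜) W (y (a + m))‖ ≤
      ‖W * V‖ * r ^ m * ‖toEuclideanCLM (𝕜 := 𝕜) V⁻¹ (y a)‖ := by
  set T := toEuclideanCLM (n := n) (𝕜 := 𝕜)
  have hiter : y (a + m) = T ((V * D * V⁻¹) ^ m) (y a) := by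
    induction m with
    | zero => simp
    | succ m ih =>
      rw [← add_assoc, hy, hF _ (by omega) (by omega), ih (by omega), pow_succ',
        map_mul T (V * D * V⁻¹), mul_apply_eq_comp]
  have hV' : V * V⁻¹ = 1 := mul_nonsing_inv V ((isUnit_iff_isUnit_det V).mp hV)
  have hcancel :
      T (W * (V * D * V⁻¹) ^ m * V) (T V⁻¹ (y a)) = T (W * (V * D * V⁻¹) ^ m) (y a) := by
    rw [← mul_apply_eq_comp, ← map_mul, mul_assoc, hV', mul_one]
  calc ‖T W (y (a + m))‖ = ‖T (W * (V * D * V⁻¹) ^ m * V) (T V⁻¹ (y a))‖ := by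
        rw [hcancel, map_mul T W, mul_apply_eq_comp, hiter]
    _ ≤ ‖W * (V * D * V⁻¹) ^ m * V‖ * ‖T V⁻¹ (y a)‖ := (T _).le_opNorm _
    _ ≤ ‖W * V‖ * r ^ m * ‖T V⁻¹ (y a)‖ := by
        gcongr
        exact norm_mul_conj_pow_mul_le hV hD hr h W m

end Modal

/-- Graph-based minimum dwell time theorem (non-defective case).  The subsystem matrices
`Aᵢ` are Schur stable and diagonalizable, `Aᵢ = Vᵢ Dᵢ Vᵢ⁻¹` over `ℂ`, with spectral radii
`ρᵢ ∈ (0,1)`.  The switching graph has weights `ω⁺ᵢⱼ = ln ‖Vⱼ⁻¹ Vᵢ‖` (spectral norm) and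
`ω⁻ᵢⱼ = -ln ρᵢ > 0`.  If the dwell time `τ` exceeds the maximum cycle ratio `ν(𝒢)`, then
every solution of the switched system, for a switching signal respecting `𝒢` with all
switching intervals at least `τ`, converges to zero. -/
theorem min_dwell_time_stability_nondefective
    {N M : ℕ} (A : Fin M → Matrix (Fin N) (Fin N) ℝ)
    (V D : Fin M → Matrix (Fin N) (Fin N) ℂ) (ρ : Fin M → ℝ)
    (hVunit : ∀ i, IsUnit (V i))
    (hDdiag : ∀ i, (D i).IsDiag)
    (hdecomp : ∀ i, (A i).map Complex.ofReal = V i * D i * (V i)⁻¹)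
    (hρ : ∀ i, ρ i = (spectralRadius ℂ ((A i).map Complex.ofReal)).toReal)
    (hρpos : ∀ i, 0 < ρ i) (hSchur : ∀ i, ρ i < 1)
    (E : Fin M → Fin M → Prop)
    (ν τ : ℝ)
    (hν : IsGreatest {r : ℝ | ∃ C, IsCycleList E C ∧
            r = cycleWeight (fun i j => Real.log ‖(V j)⁻¹ * V i‖) C /
                cycleWeight (fun i _ => -Real.log (ρ i)) C} ν)
    (hτ : ν < τ)
    (s : ℕ → Fin M) (t : ℕ → ℕ)
    (ht0 : t 0 = 0) (htmono : StrictMono t)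
    (hdwell : ∀ k, τ ≤ ((t (k + 1) - t k : ℕ) : ℝ))
    (hrespect : ∀ k, E (s (k + 1)) (s (k + 2)))
    (σ : ℕ → Fin M)
    (hσ : ∀ k u, t k ≤ u → u < t (k + 1) → σ u = s (k + 1))
    (x : ℕ → Fin N → ℝ)
    (hx : ∀ u, x (u + 1) = (A (σ u)).mulVec (x u)) :
    Filter.Tendsto x Filter.atTop (nhds 0) := by
  have : Nonempty (Fin M) := ⟨s 0⟩
  set y : ℕ → EuclideanSpace ℂ (Fin N) := fun u => WithLp.toLp 2 fun j => (x u j : ℂ)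
  set z : ℕ → ℝ := fun k => ‖toEuclideanCLM (𝕜 := ℂ) (V (s (k + 1)))⁻¹ (y (t k))‖
  have hy : ∀ u, y (u + 1) = toEuclideanCLM (𝕜 := ℂ) ((A (σ u)).map Complex.ofReal) (y u) :=
    fun u => by simp only [y, hx, toLp_ofReal_mulVec]
  have hDρ : ∀ i j, ‖D i j j‖ ≤ ρ i := fun i j => by
    simpa only [hρ, hdecomp] using norm_diag_le_spectralRadius (hVunit i) (hDdiag i) j
  have hblock : ∀ k W m, t k + m ≤ t (k + 1) → ‖toEuclideanCLM (𝕜 := ℂ) W (y (t k + m))‖ ≤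
      ‖W * V (s (k + 1))‖ * ρ (s (k + 1)) ^ m * z k := fun k W m hm =>
    norm_toEuclideanCLM_le_of_block hy (hVunit _) (hDdiag _) (hρpos _).le (hDρ _)
      (fun u h1 h2 => by rw [hσ k u h1 h2, hdecomp]) W hm
  set g : Fin M → Fin M → ℝ := fun i j => Real.log ‖(V j)⁻¹ * V i‖ - ν * -Real.log (ρ i)
  obtain ⟨B, hB⟩ := exists_walkWeight_le (E := E) g fun C hC =>
    cycleWeight_sub_mul_nonpos (fun i _ => neg_pos.2 (Real.log_neg (hρpos i) (hSchur i))) hC.1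
      (hν.2 ⟨C, hC, rfl⟩)
  obtain ⟨i₀, hi₀⟩ := Finite.exists_max fun i => ρ i ^ (τ - ν)
  have hz : Tendsto z atTop (𝓝 0) := by
    refine tendsto_zero_of_le_mul_exp (e := fun k => g (s (k + 1)) (s (k + 2)))
      (fun k => norm_nonneg _) (Real.rpow_nonneg (hρpos i₀).le _)
      (Real.rpow_lt_one (hρpos i₀).le (hSchur i₀) (sub_pos.2 hτ)) (fun k => ?_)
      (hB (fun j => s (j + 1)) hrespect)
    have htk : t k ≤ t (k + 1) := (htmono (Nat.lt_succ_self k)).le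
    have hstep := hblock k (V (s (k + 2)))⁻¹ (t (k + 1) - t k) (by omega)
    rw [Nat.add_sub_cancel' htk] at hstep
    calc z (k + 1) ≤ _ := hstep
      _ ≤ ρ (s (k + 1)) ^ (τ - ν) * Real.exp (g (s (k + 1)) (s (k + 2))) * z k := by
        gcongr ?_ * _
        exact mul_pow_le_rpow_sub_mul_exp (hρpos _) (hSchur _).le (hdwell k)
      _ ≤ _ := by gcongr ?_ * _ * _; exact hi₀ _
  obtain ⟨i₁, hi₁⟩ := Finite.exists_max fun i => ‖V i‖
  refine tendsto_zero_of_norm_le_on_blocks ht0 htmono hz (c := ‖V i₁‖) fun k u h1 h2 => ?_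
  have hu := hblock k 1 (u - t k) (by omega)
  rw [Nat.add_sub_cancel' h1, map_one, one_apply_eq_self, one_mul] at hu
  calc ‖x u‖ ≤ ‖y u‖ := norm_le_norm_toLp_ofReal _
    _ ≤ ‖V (s (k + 1))‖ * ρ (s (k + 1)) ^ (u - t k) * z k := hu
    _ ≤ ‖V i₁‖ * z k := by
        gcongr
        exact (mul_le_of_le_one_right (norm_nonneg _)
          (pow_le_one₀ (hρpos _).le (hSchur _).le)).trans (hi₁ _)
end

section
/- Let $A_1, A_2 \in \mathbb{R}^{N\times N}$ be Schur stable, diagonalizable, and simultaneously triangularizable (there exists an invertible $T$ with $T^{-1}A_1T$ and $T^{-1}A_2T$ both upper triangular, and the eigenvector matrices $V_1, V_2$ can be chosen upper triangular). Then $\rho(|V_2^{-1}V_1| \, |V_1^{-1}V_2|) = 1$, and consequently the dwell-time bound $\frac{\ln \rho(|V_2^{-1}V_1||V_1^{-1}V_2|)}{-\ln(\rho_1\rho_2)}$ equals $0$, i.e., the bimodal switched system is stable under arbitrary switching (any positive dwell time suffices). -/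
/-- The entrywise absolute value of a complex matrix, viewed again as a complex matrix. -/
noncomputable def absMatrix {n : Type*} (A : Matrix n n ℂ) : Matrix n n ℂ :=
  Matrix.of fun i j => (‖A i j‖ : ℂ)

/-!
Since `S = V₂⁻¹ V₁` is upper triangular, so are `|S|` and `|S⁻¹|`, and the diagonal of
`|S| |S⁻¹|` is `|S_jj| |(S⁻¹)_jj| = |S_jj (S⁻¹)_jj| = 1`. The spectrum of a triangular matrix is
its diagonal, so `ρ(|S| |S⁻¹|) = 1` and the dwell-time bound is `log 1 / … = 0`.

For stability, each `A_i = V_i D_i V_i⁻¹` is upper triangular with diagonal `D_i`, of modulus at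
most `ρ_i < 1`. Back-substitution from the last coordinate: once all coordinates after `j` tend
to `0`, the `j`-th one obeys `|x_j(t+1)| ≤ ρ |x_j(t)| + ε(t)` with `ε → 0`, which forces
`x_j → 0` whatever the switching signal.
-/

open Matrix Finset Filter Topology
open scoped ENNReal

namespace Matrix

variable {n R : Type*} [LinearOrder n]

theorem IsUpperTriangular.absMatrix {M : Matrix n n ℂ} (hM : M.IsUpperTriangular) :
    (absMatrix M).IsUpperTriangular :=
  fun i j h => by simp [_root_.absMatrix, hM h]

variable [Fintype n]

section CommRing

variable [CommRing R]

theorem IsUpperTriangular.diag_mul {B C : Matrix n n R} (hB : B.IsUpperTriangular)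
    (hC : C.IsUpperTriangular) : (B * C).diag = B.diag * C.diag := by
  ext j
  rw [diag_apply, mul_apply, Finset.sum_eq_single j]
  · rfl
  · intro k _ hkj
    rcases hkj.lt_or_gt with h | h
    · rw [hB h, zero_mul]
    · rw [hC h, mul_zero]
  · simp

theorem IsUpperTriangular.inv {V : Matrix n n R} (hV : V.IsUpperTriangular) :
    V⁻¹.IsUpperTriangular := by
  by_cases hVu : IsUnit V
  · have := hVu.invertible
    exact blockTriangular_inv_of_blockTriangular hV
  · rw [nonsing_inv_apply_not_isUnit _ (mt (isUnit_iff_isUnit_det V).2 hVu)]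
    exact blockTriangular_zero

theorem IsUpperTriangular.diag_mul_diag_inv {V : Matrix n n R} (hV : V.IsUpperTriangular)
    (hVu : IsUnit V) : V.diag * V⁻¹.diag = 1 := by
  rw [← hV.diag_mul hV.inv, mul_nonsing_inv _ ((isUnit_iff_isUnit_det V).1 hVu), diag_one]

theorem IsUpperTriangular.conj {V D : Matrix n n R} (hV : V.IsUpperTriangular)
    (hD : D.IsUpperTriangular) : (V * D * V⁻¹).IsUpperTriangular :=
  (hV.mul hD).mul hV.inv

theorem IsUpperTriangular.diag_conj {V D : Matrix n n R} (hV : V.IsUpperTriangular)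
    (hVu : IsUnit V) (hD : D.IsUpperTriangular) : (V * D * V⁻¹).diag = D.diag := by
  rw [IsUpperTriangular.diag_mul (hV.mul hD) hV.inv, hV.diag_mul hD, mul_comm V.diag, mul_assoc,
    hV.diag_mul_diag_inv hVu, mul_one]

theorem IsUpperTriangular.mulVec_apply {M : Matrix n n R} (hM : M.IsUpperTriangular)
    (v : n → R) (j : n) : (M *ᵥ v) j = M j j * v j + ∑ k ∈ {k | j < k}, M j k * v k := by
  rw [mulVec, dotProduct, ← Finset.sum_filter_add_sum_filter_not univ (j < ·), add_comm,
    Finset.sum_eq_single j]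
  · intro k hk hkj
    rw [Finset.mem_filter, not_lt] at hk
    rw [hM (lt_of_le_of_ne hk.2 hkj), zero_mul]
  · simp

end CommRing

theorem IsUpperTriangular.spectrum_eq {K : Type*} [Field K] {M : Matrix n n K}
    (hM : M.IsUpperTriangular) : spectrum K M = Set.range M.diag := by
  ext r
  simp [mem_spectrum_iff_isRoot_charpoly, charpoly_of_isUpperTriangular M hM,
    Polynomial.eval_prod, Finset.prod_eq_zero_iff, sub_eq_zero]
  exact exists_congr fun _ => eq_comm

theorem IsUpperTriangular.spectralRadius_eq {𝕜 : Type*} [NormedField 𝕜] {M : Matrix n n 𝕜}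
    (hM : M.IsUpperTriangular) : spectralRadius 𝕜 M = ⨆ i, (‖M i i‖₊ : ℝ≥0∞) := by
  rw [spectralRadius, hM.spectrum_eq, iSup_range]
  rfl

theorem IsUpperTriangular.spectralRadius_absMatrix_mul_absMatrix_inv [Nonempty n]
    {S : Matrix n n ℂ} (hS : S.IsUpperTriangular) (hSu : IsUnit S) :
    spectralRadius ℂ (_root_.absMatrix S * _root_.absMatrix S⁻¹) = 1 := by
  have hdiag (i : n) : (_root_.absMatrix S * _root_.absMatrix S⁻¹) i i = 1 := by
    have h := congrFun (hS.diag_mul_diag_inv hSu) i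
    rw [← diag_apply (_root_.absMatrix S * _root_.absMatrix S⁻¹),
      hS.absMatrix.diag_mul hS.inv.absMatrix]
    simp_all [_root_.absMatrix, ← Complex.ofReal_mul, ← norm_mul]
  rw [IsUpperTriangular.spectralRadius_eq (hS.absMatrix.mul hS.inv.absMatrix)]
  simp [hdiag]

end Matrix

theorem tendsto_zero_of_abs_succ_le {ρ : ℝ} (hρ : ρ < 1) {y ε : ℕ → ℝ}
    (hε : Tendsto ε atTop (𝓝 0)) (h : ∀ t, |y (t + 1)| ≤ ρ * |y t| + ε t) :
    Tendsto y atTop (𝓝 0) := by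
  set r := max ρ 0
  have hr0 : 0 ≤ r := le_max_right _ _
  have hr1 : r < 1 := max_lt hρ one_pos
  have hr (t : ℕ) : |y (t + 1)| ≤ r * |y t| + ε t :=
    (h t).trans (by gcongr; exact le_max_left _ _)
  rw [Metric.tendsto_atTop]
  intro δ hδ
  obtain ⟨T, hT⟩ := eventually_atTop.1
    (hε.eventually (gt_mem_nhds (show 0 < (1 - r) * (δ / 2) by nlinarith)))
  have hbound (s : ℕ) : |y (T + s)| ≤ r ^ s * |y T| + δ / 2 := by
    induction s with
    | zero => simpa using (half_pos hδ).le
    | succ s ih =>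
      calc |y (T + (s + 1))| ≤ r * |y (T + s)| + ε (T + s) := hr (T + s)
        _ ≤ r * (r ^ s * |y T| + δ / 2) + (1 - r) * (δ / 2) := by
          gcongr
          exact (hT _ (Nat.le_add_right T s)).le
        _ = r ^ (s + 1) * |y T| + δ / 2 := by ring
  have hpow : Tendsto (fun s => r ^ s * |y T|) atTop (𝓝 0) := by
    simpa using (tendsto_pow_atTop_nhds_zero_of_lt_one hr0 hr1).mul_const |y T|
  obtain ⟨S, hS⟩ := eventually_atTop.1 (hpow.eventually (gt_mem_nhds (half_pos hδ)))
  refine ⟨T + S, fun t ht => ?_⟩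
  obtain ⟨s, rfl⟩ := Nat.exists_eq_add_of_le (le_trans (Nat.le_add_right T S) ht)
  rw [Real.dist_eq, sub_zero]
  linarith [hbound s, hS s (by omega)]

theorem tendsto_zero_of_isUpperTriangular_switched {ι n : Type*} [Fintype ι] [Fintype n]
    [LinearOrder n] {A : ι → Matrix n n ℝ} {ρ : ℝ} (hA : ∀ i, (A i).IsUpperTriangular)
    (hdiag : ∀ i j, |A i j j| ≤ ρ) (hρ : ρ < 1) {σ : ℕ → ι} {x : ℕ → n → ℝ}
    (hx : ∀ t, x (t + 1) = A (σ t) *ᵥ x t) : Tendsto x atTop (𝓝 0) := by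
  rw [tendsto_pi_nhds]
  intro j
  induction j using WellFoundedGT.induction with
  | _ j ih =>
  refine tendsto_zero_of_abs_succ_le hρ
    (ε := fun t => ∑ k ∈ {k | j < k}, (∑ i, |A i j k|) * |x t k|) ?_ fun t => ?_
  · simpa using tendsto_finsetSum _ fun k hk =>
      (ih k (Finset.mem_filter.1 hk).2).abs.const_mul (∑ i, |A i j k|)
  · rw [hx, (hA (σ t)).mulVec_apply]
    calc _ ≤ |A (σ t) j j| * |x t j| + ∑ k ∈ {k | j < k}, |A (σ t) j k| * |x t k| := by
          rw [← abs_mul]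
          refine (abs_add_le _ _).trans (add_le_add_right ?_ _)
          exact (abs_sum_le_sum_abs _ _).trans_eq (by simp only [abs_mul])
      _ ≤ ρ * |x t j| + ∑ k ∈ {k | j < k}, (∑ i, |A i j k|) * |x t k| := by
          gcongr with k
          · exact hdiag _ _
          · exact single_le_sum (f := fun i => |A i j k|) (fun i _ => abs_nonneg _) (mem_univ _)

theorem bimodal_simultaneously_triangularizable_stable_general
    {N : ℕ} (hN : 0 < N)
    (A : Fin 2 → Matrix (Fin N) (Fin N) ℝ)
    (V D : Fin 2 → Matrix (Fin N) (Fin N) ℂ) (ρ : Fin 2 → ℝ)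
    (hVunit : ∀ i, IsUnit (V i))
    (hVtri : ∀ i, (V i).BlockTriangular id)
    (hDdiag : ∀ i, (D i).IsDiag)
    (hdecomp : ∀ i, (A i).map Complex.ofReal = V i * D i * (V i)⁻¹)
    (hρ1 : ∀ i, ρ i < 1)
    (hD : ∀ i j, ‖D i j j‖ ≤ ρ i) :
    spectralRadius ℂ (absMatrix ((V 1)⁻¹ * V 0) * absMatrix ((V 0)⁻¹ * V 1)) = 1 ∧
    Real.log (spectralRadius ℂ
        (absMatrix ((V 1)⁻¹ * V 0) * absMatrix ((V 0)⁻¹ * V 1))).toReal /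
      (-Real.log (ρ 0 * ρ 1)) = 0 ∧
    ∀ (σ : ℕ → Fin 2) (x : ℕ → Fin N → ℝ),
      (∀ t, x (t + 1) = (A (σ t)).mulVec (x t)) →
      Filter.Tendsto x Filter.atTop (nhds 0) := by
  have hV : ∀ i, (V i).IsUpperTriangular := hVtri
  have hDtri (i : Fin 2) : (D i).IsUpperTriangular := fun _ _ h => hDdiag i h.ne'
  have : Nonempty (Fin N) := Fin.pos_iff_nonempty.1 hN
  have hSinv : ((V 1)⁻¹ * V 0)⁻¹ = (V 0)⁻¹ * V 1 := by
    rw [Matrix.mul_inv_rev, nonsing_inv_nonsing_inv _ ((isUnit_iff_isUnit_det _).1 (hVunit 1))]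
  have hρS : spectralRadius ℂ (absMatrix ((V 1)⁻¹ * V 0) * absMatrix ((V 0)⁻¹ * V 1)) = 1 := by
    rw [← hSinv]
    exact IsUpperTriangular.spectralRadius_absMatrix_mul_absMatrix_inv ((hV 1).inv.mul (hV 0))
      ((isUnit_nonsing_inv_iff.2 (hVunit 1)).mul (hVunit 0))
  refine ⟨hρS, by simp [hρS], fun σ x hx => ?_⟩
  have hA (i : Fin 2) : (A i).IsUpperTriangular := fun j k hjk => by
    simpa [← hdecomp] using (hV i).conj (hDtri i) hjk
  have hAdiag (i : Fin 2) (j : Fin N) : |A i j j| ≤ univ.sup' univ_nonempty ρ := by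
    have hj : (A i j j : ℂ) = D i j j := by
      simpa [← hdecomp] using congrFun ((hV i).diag_conj (hVunit i) (hDtri i)) j
    calc |A i j j| = ‖D i j j‖ := by rw [← hj, Complex.norm_real, Real.norm_eq_abs]
      _ ≤ ρ i := hD i j
      _ ≤ univ.sup' univ_nonempty ρ := le_sup' ρ (mem_univ i)
  exact tendsto_zero_of_isUpperTriangular_switched hA hAdiag
    ((sup'_lt_iff _).2 fun i _ => hρ1 i) hx

/-- For a bimodal switched system with Schur stable, diagonalizable, simultaneously
triangularizable subsystem matrices (upper triangular eigenvector matrices `V₁, V₂`),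
one has `ρ(|V₂⁻¹V₁| |V₁⁻¹V₂|) = 1`, the corresponding dwell-time bound
`ln ρ(|V₂⁻¹V₁||V₁⁻¹V₂|) / (-ln (ρ₁ρ₂))` equals `0`, and the switched system is
asymptotically stable under arbitrary switching. -/
theorem bimodal_simultaneously_triangularizable_stable
    {N : ℕ} (hN : 0 < N)
    (A : Fin 2 → Matrix (Fin N) (Fin N) ℝ)
    (V D : Fin 2 → Matrix (Fin N) (Fin N) ℂ) (ρ : Fin 2 → ℝ)
    (hVunit : ∀ i, IsUnit (V i))
    (hVtri : ∀ i, (V i).BlockTriangular id)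
    (hDdiag : ∀ i, (D i).IsDiag)
    (hdecomp : ∀ i, (A i).map Complex.ofReal = V i * D i * (V i)⁻¹)
    (hρ0 : ∀ i, 0 < ρ i) (hρ1 : ∀ i, ρ i < 1)
    (hD : ∀ i j, ‖D i j j‖ ≤ ρ i) :
    spectralRadius ℂ (absMatrix ((V 1)⁻¹ * V 0) * absMatrix ((V 0)⁻¹ * V 1)) = 1 ∧
    Real.log (spectralRadius ℂ
        (absMatrix ((V 1)⁻¹ * V 0) * absMatrix ((V 0)⁻¹ * V 1))).toReal /
      (-Real.log (ρ 0 * ρ 1)) = 0 ∧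
    ∀ (σ : ℕ → Fin 2) (x : ℕ → Fin N → ℝ),
      (∀ t, x (t + 1) = (A (σ t)).mulVec (x t)) →
      Filter.Tendsto x Filter.atTop (nhds 0) :=
  bimodal_simultaneously_triangularizable_stable_general hN A V D ρ hVunit hVtri hDdiag hdecomp hρ1
    hD
end

section
/- For any invertible matrix $A \in \mathbb{C}^{N\times N}$ and any induced $p$-norm ($p = 1$ or $p = \infty$), and for any invertible diagonal matrices $D_L, D_R$, the scaled condition number satisfies $\kappa_p(D_L A D_R) \ge \rho(|A| \, |A^{-1}|)$, where $\kappa_p(B) = \|B\|_p \|B^{-1}\|_p$ and $|A|$ is the entrywise absolute value. -/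
/-- The induced `∞`-norm of a matrix: the maximum absolute row sum. -/
noncomputable def rowSumNorm {N : ℕ} (A : Matrix (Fin N) (Fin N) ℂ) : ℝ :=
  ⨆ i, ∑ j, ‖A i j‖

/-- The induced `1`-norm of a matrix: the maximum absolute column sum. -/
noncomputable def colSumNorm {N : ℕ} (A : Matrix (Fin N) (Fin N) ℂ) : ℝ :=
  ⨆ j, ∑ i, ‖A i j‖

/-!
For `B = D_L A D_R` the product `|B| |B⁻¹|` equals `|D_L| (|A| |A⁻¹|) |D_L|⁻¹`, because the
diagonal factors `|D_R| |D_R|⁻¹` in the middle cancel; so it has the spectral radius of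
`|A| |A⁻¹|`. For the `∞`-norm, `ρ(|B| |B⁻¹|) ≤ ‖|B| |B⁻¹|‖ ≤ ‖|B|‖ ‖|B⁻¹|‖ = ‖B‖ ‖B⁻¹‖`;
the `1`-norm case is the `∞`-norm case for the transposes.
-/

open Matrix

section Diagonal

variable {n K : Type*} [Fintype n] [DecidableEq n] [Field K] {d : n → K}

lemma Matrix.diagonal_mul_diagonal_inv (hd : ∀ i, d i ≠ 0) : diagonal d * diagonal d⁻¹ = 1 := by
  rw [diagonal_mul_diagonal, ← diagonal_one]
  exact congrArg diagonal (funext fun i => mul_inv_cancel₀ (hd i))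

lemma Matrix.inv_diagonal_of_ne_zero (hd : ∀ i, d i ≠ 0) : (diagonal d)⁻¹ = diagonal d⁻¹ :=
  inv_eq_right_inv (diagonal_mul_diagonal_inv hd)

lemma Matrix.spectrum_diagonal_mul_mul_diagonal_inv (hd : ∀ i, d i ≠ 0) (M : Matrix n n K) :
    spectrum K (diagonal d * M * diagonal d⁻¹) = spectrum K M :=
  spectrum.units_conjugate (u := ⟨diagonal d, diagonal d⁻¹, diagonal_mul_diagonal_inv hd,
    by simpa using diagonal_mul_diagonal_inv (d := d⁻¹) (by simpa using hd)⟩)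

end Diagonal

lemma Matrix.spectrum_transpose {n R : Type*} [Fintype n] [DecidableEq n] [CommRing R]
    (M : Matrix n n R) : spectrum R Mᵀ = spectrum R M := by
  ext k
  rw [spectrum.mem_iff, spectrum.mem_iff, ← isUnit_transpose, transpose_sub, transpose_transpose,
    algebraMap_eq_diagonal, diagonal_transpose]

lemma absMatrix_transpose {n : Type*} (A : Matrix n n ℂ) : absMatrix Aᵀ = (absMatrix A)ᵀ := rfl

section AbsMatrix

variable {n : Type*} [Fintype n] [DecidableEq n]

lemma absMatrix_diagonal_mul_mul_diagonal (d e : n → ℂ) (A : Matrix n n ℂ) :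
    absMatrix (diagonal d * A * diagonal e) =
      diagonal (fun i => (‖d i‖ : ℂ)) * absMatrix A * diagonal (fun i => (‖e i‖ : ℂ)) := by
  ext i j
  simp [absMatrix, diagonal_mul, mul_diagonal]

lemma spectralRadius_absMatrix_mul_absMatrix_inv_diagonal_mul_mul_diagonal (A : Matrix n n ℂ)
    {dL dR : n → ℂ} (hdL : ∀ i, dL i ≠ 0) (hdR : ∀ i, dR i ≠ 0) :
    spectralRadius ℂ (absMatrix (diagonal dL * A * diagonal dR) *
        absMatrix (diagonal dL * A * diagonal dR)⁻¹) =
      spectralRadius ℂ (absMatrix A * absMatrix A⁻¹) := by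
  set a : n → ℂ := fun i => (‖dL i‖ : ℂ)
  set b : n → ℂ := fun i => (‖dR i‖ : ℂ)
  have hnorm_inv (d : n → ℂ) : (fun i => (‖d⁻¹ i‖ : ℂ)) = (fun i => (‖d i‖ : ℂ))⁻¹ := by
    funext i; simp
  have hb : ∀ i, b i ≠ 0 := fun i => by simpa [b] using hdR i
  have ha : ∀ i, a i ≠ 0 := fun i => by simpa [a] using hdL i
  have hconj : absMatrix (diagonal dL * A * diagonal dR) *
      absMatrix (diagonal dL * A * diagonal dR)⁻¹ =
        diagonal a * (absMatrix A * absMatrix A⁻¹) * diagonal a⁻¹ := by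
    rw [Matrix.mul_inv_rev, Matrix.mul_inv_rev, inv_diagonal_of_ne_zero hdL,
      inv_diagonal_of_ne_zero hdR, ← mul_assoc, absMatrix_diagonal_mul_mul_diagonal,
      absMatrix_diagonal_mul_mul_diagonal,
      hnorm_inv, hnorm_inv]
    calc _ = diagonal a * absMatrix A * (diagonal b * diagonal b⁻¹) * absMatrix A⁻¹ *
          diagonal a⁻¹ := by simp only [mul_assoc]; rfl
      _ = _ := by rw [diagonal_mul_diagonal_inv hb, mul_one]; simp only [mul_assoc]
  rw [hconj, spectralRadius, spectrum_diagonal_mul_mul_diagonal_inv ha, spectralRadius]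

end AbsMatrix

section RowSumNorm

attribute [local instance] Matrix.linftyOpNormedAddCommGroup Matrix.linftyOpNormedRing
  Matrix.linftyOpNormedAlgebra

variable {N : ℕ}

lemma rowSumNorm_eq_linfty_opNorm (A : Matrix (Fin N) (Fin N) ℂ) : rowSumNorm A = ‖A‖ := by
  change _ = ‖fun i => WithLp.toLp 1 (A i)‖
  have hrow (i : Fin N) : ∑ j, ‖A i j‖ = ‖WithLp.toLp 1 (A i)‖ :=
    (PiLp.norm_eq_of_L1 (WithLp.toLp 1 (A i))).symm
  have hnonneg : 0 ≤ rowSumNorm A := Real.iSup_nonneg fun i => by positivity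
  refine le_antisymm (Real.iSup_le (fun i => ?_) (norm_nonneg _)) ?_
  · exact (hrow i).trans_le (norm_le_pi_norm (fun i => WithLp.toLp 1 (A i)) i)
  · refine (pi_norm_le_iff_of_nonneg hnonneg).2 fun i => (hrow i).symm.trans_le ?_
    exact le_ciSup (f := fun i => ∑ j, ‖A i j‖) (Finite.bddAbove_range _) i

lemma rowSumNorm_mul_le (A B : Matrix (Fin N) (Fin N) ℂ) :
    rowSumNorm (A * B) ≤ rowSumNorm A * rowSumNorm B := by
  simpa only [rowSumNorm_eq_linfty_opNorm] using linfty_opNorm_mul A B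

lemma spectralRadius_toReal_le_rowSumNorm (M : Matrix (Fin N) (Fin N) ℂ) :
    (spectralRadius ℂ M).toReal ≤ rowSumNorm M := by
  rw [rowSumNorm_eq_linfty_opNorm]
  rcases isEmpty_or_nonempty (Fin N) with hN | hN
  · simp [spectrum.SpectralRadius.of_subsingleton]
  · refine ENNReal.toReal_le_of_le_ofReal (norm_nonneg _) ?_
    simpa [ENNReal.ofReal, Real.toNNReal_coe] using spectrum.spectralRadius_le_nnnorm (𝕜 := ℂ) M

end RowSumNorm

section ConditionNumber

variable {N : ℕ}

lemma rowSumNorm_absMatrix (A : Matrix (Fin N) (Fin N) ℂ) :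
    rowSumNorm (absMatrix A) = rowSumNorm A := by
  simp [rowSumNorm, absMatrix]

lemma colSumNorm_eq_rowSumNorm_transpose (A : Matrix (Fin N) (Fin N) ℂ) :
    colSumNorm A = rowSumNorm Aᵀ := rfl

lemma spectralRadius_absMatrix_mul_le_rowSumNorm (B C : Matrix (Fin N) (Fin N) ℂ) :
    (spectralRadius ℂ (absMatrix B * absMatrix C)).toReal ≤ rowSumNorm B * rowSumNorm C := calc
  _ ≤ rowSumNorm (absMatrix B * absMatrix C) := spectralRadius_toReal_le_rowSumNorm _
  _ ≤ rowSumNorm (absMatrix B) * rowSumNorm (absMatrix C) := rowSumNorm_mul_le _ _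
  _ = rowSumNorm B * rowSumNorm C := by rw [rowSumNorm_absMatrix, rowSumNorm_absMatrix]

lemma spectralRadius_absMatrix_mul_le_colSumNorm (B C : Matrix (Fin N) (Fin N) ℂ) :
    (spectralRadius ℂ (absMatrix B * absMatrix C)).toReal ≤ colSumNorm B * colSumNorm C := by
  have hT : spectralRadius ℂ (absMatrix Cᵀ * absMatrix Bᵀ) =
      spectralRadius ℂ (absMatrix B * absMatrix C) := by
    rw [absMatrix_transpose, absMatrix_transpose, ← transpose_mul, spectralRadius,
      spectrum_transpose, spectralRadius]
  rw [← hT, colSumNorm_eq_rowSumNorm_transpose, colSumNorm_eq_rowSumNorm_transpose, mul_comm]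
  exact spectralRadius_absMatrix_mul_le_rowSumNorm Cᵀ Bᵀ

end ConditionNumber

theorem bauer_condition_number_lower_bound_general
    {N : ℕ} (A : Matrix (Fin N) (Fin N) ℂ)
    (dL dR : Fin N → ℂ) (hdL : ∀ i, dL i ≠ 0) (hdR : ∀ i, dR i ≠ 0) :
    (spectralRadius ℂ (absMatrix A * absMatrix A⁻¹)).toReal ≤
      rowSumNorm (Matrix.diagonal dL * A * Matrix.diagonal dR) *
        rowSumNorm (Matrix.diagonal dL * A * Matrix.diagonal dR)⁻¹ ∧
    (spectralRadius ℂ (absMatrix A * absMatrix A⁻¹)).toReal ≤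
      colSumNorm (Matrix.diagonal dL * A * Matrix.diagonal dR) *
        colSumNorm (Matrix.diagonal dL * A * Matrix.diagonal dR)⁻¹ := by
  rw [← spectralRadius_absMatrix_mul_absMatrix_inv_diagonal_mul_mul_diagonal A hdL hdR]
  exact ⟨spectralRadius_absMatrix_mul_le_rowSumNorm _ _,
    spectralRadius_absMatrix_mul_le_colSumNorm _ _⟩

/-- One direction of Bauer's theorem: for any invertible matrix `A` and any invertible
diagonal scalings `D_L, D_R`, the `∞`-norm and `1`-norm condition numbers of `D_L A D_R`
are bounded below by `ρ(|A| |A⁻¹|)`. -/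
theorem bauer_condition_number_lower_bound
    {N : ℕ} (A : Matrix (Fin N) (Fin N) ℂ) (hA : IsUnit A)
    (dL dR : Fin N → ℂ) (hdL : ∀ i, dL i ≠ 0) (hdR : ∀ i, dR i ≠ 0) :
    (spectralRadius ℂ (absMatrix A * absMatrix A⁻¹)).toReal ≤
      rowSumNorm (Matrix.diagonal dL * A * Matrix.diagonal dR) *
        rowSumNorm (Matrix.diagonal dL * A * Matrix.diagonal dR)⁻¹ ∧
    (spectralRadius ℂ (absMatrix A * absMatrix A⁻¹)).toReal ≤
      colSumNorm (Matrix.diagonal dL * A * Matrix.diagonal dR) *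
        colSumNorm (Matrix.diagonal dL * A * Matrix.diagonal dR)⁻¹ :=
  bauer_condition_number_lower_bound_general A dL dR hdL hdR
end
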